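/- Let A be a countable alphabet, P a probability distribution on A, and D a proper and almost surely complete dictionary over A. Let β be any finite string over A such that no string of D of length strictly less than |β| is a prefix of β. Then -∑_{α ∈ (D,β)} P(α) log₂ P(α) ≥ -P(β) log₂ P(β), where (D,β) = {α ∈ D : β is a prefix of α} and the sum is taken in [0,∞]. -/

import Mathlib

open scoped ENNReal
open Filter

/-- The probability of a finite string, obtained by extending the
distribution `P` multiplicatively: `P(a₁⋯aₙ) = ∏ᵢ P(aᵢ)`. -/
noncomputable def strProb {A : Type*} (P : PMF A) (l : List A) : ℝ≥0∞ :=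
  (l.map fun a => P a).prod

/-- A dictionary is a set of nonempty finite strings. -/
def IsDictionary {A : Type*} (D : Set (List A)) : Prop :=
  ∀ α ∈ D, α ≠ []

/-- A dictionary is proper if no string in it is a (proper) prefix of
another string in it. -/
def IsProper {A : Type*} (D : Set (List A)) : Prop :=
  ∀ α ∈ D, ∀ β ∈ D, α <+: β → α = β

/-- A dictionary is complete if every infinite sequence over `A` has a
prefix in it. -/
def IsCompleteDict {A : Type*} (D : Set (List A)) : Prop :=
  ∀ x : ℕ → A, ∃ α ∈ D, α = (List.range α.length).map x

/-- The probability that the length-`n` prefix of a random infinite sequence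
has some prefix belonging to `D`. -/
noncomputable def prefixProb {A : Type*} (P : PMF A) (D : Set (List A)) (n : ℕ) : ℝ≥0∞ :=
  ∑' γ : {γ : List A // γ.length = n ∧ ∃ β ∈ D, β <+: γ}, strProb P γ

/-- `D` is almost surely complete: under the infinite product measure `P^ℕ`,
the event that an infinite sequence has a prefix in `D` has probability `1`.
(By continuity from below, this probability is the limit, as `n → ∞`, of the
probability that the length-`n` prefix has a prefix in `D`.) -/
def IsASC {A : Type*} (P : PMF A) (D : Set (List A)) : Prop :=
  Tendsto (prefixProb P D) atTop (nhds 1)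

/-- `Tset D n` = strings of length `n` having no prefix in `D`. -/
def Tset {A : Type*} (D : Set (List A)) (n : ℕ) : Set (List A) :=
  {α | α.length = n ∧ ∀ β ∈ D, ¬ β <+: α}

/-- `Dperp D n = {α ∈ D : |α| = n} ∪ Tₙ`. -/
def Dperp {A : Type*} (D : Set (List A)) (n : ℕ) : Set (List A) :=
  {α ∈ D | α.length = n} ∪ Tset D n

/-- `Dn D n = {α ∈ D : |α| < n} ∪ Dₙ^⊥`. -/
def Dn {A : Type*} (D : Set (List A)) (n : ℕ) : Set (List A) :=
  {α ∈ D | α.length < n} ∪ Dperp D n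

/-- The one-letter extensions `αA = {αa : a ∈ A}` of a string `α`. -/
def oneExt {A : Type*} (α : List A) : Set (List A) :=
  {l | ∃ a : A, l = α ++ [a]}

/-- The extension `D[α] = (D \ {α}) ∪ αA` of a dictionary at `α`. -/
def extendDict {A : Type*} (D : Set (List A)) (α : List A) : Set (List A) :=
  (D \ {α}) ∪ oneExt α

/-- The nonnegative entropy contribution `-p log₂ p ∈ [0,∞]` of a
probability value `p`. -/
noncomputable def entTerm (p : ℝ≥0∞) : ℝ≥0∞ :=
  ENNReal.ofReal (-(p.toReal * Real.logb 2 p.toReal))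

/-- The entropy `H(E) = -∑_{α∈E} P(α) log₂ P(α)` of a dictionary, in `[0,∞]`. -/
noncomputable def dictEntropy {A : Type*} (P : PMF A) (E : Set (List A)) : ℝ≥0∞ :=
  ∑' α : E, entTerm (strProb P α)

/-- The average length `l̄(E) = ∑_{α∈E} P(α)|α|` of a dictionary, in `[0,∞]`. -/
noncomputable def avgLen {A : Type*} (P : PMF A) (E : Set (List A)) : ℝ≥0∞ :=
  ∑' α : E, strProb P α * (α : List A).length

/-- The source entropy `H(P) = -∑_{a∈A} P(a) log₂ P(a)`, in `[0,∞]`. -/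
noncomputable def srcEntropy {A : Type*} (P : PMF A) : ℝ≥0∞ :=
  ∑' a : A, entTerm (P a)

/-!
Every `α ∈ (D,β)` extends `β`, so `P(α) ≤ P(β)` and hence `-P(α) log₂ P(α) ≥ P(α) · (-log₂ P(β))`.
Summing over `(D,β)`, it suffices that the total mass of `(D,β)` is at least `P(β)`.
For `n ≥ |β|` the length-`n` extensions of `β`, of total mass `P(β)`, either lie in `Tₙ` or have
a prefix in `D`; by the hypothesis on `β` such a prefix is itself an element of `(D,β)`. Hence
`P(β) ≤ P((D,β)) + P(Tₙ)`, and `P(Tₙ) = 1 - prefixProb P D n → 0` by almost sure completeness.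
-/

section StringProbability

variable {A : Type*} (P : PMF A)

lemma strProb_cons (a : A) (l : List A) : strProb P (a :: l) = P a * strProb P l := by
  simp [strProb]

lemma strProb_append (l m : List A) : strProb P (l ++ m) = strProb P l * strProb P m := by
  simp [strProb]

lemma strProb_le_one (l : List A) : strProb P l ≤ 1 := by
  induction l with
  | nil => rfl
  | cons a l ih => simpa only [strProb_cons] using mul_le_one' (P.coe_le_one a) ih

lemma strProb_ne_top (l : List A) : strProb P l ≠ ⊤ :=
  ne_top_of_le_ne_top ENNReal.one_ne_top (strProb_le_one P l)

lemma strProb_le_of_prefix {l m : List A} (h : l <+: m) : strProb P m ≤ strProb P l := by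
  obtain ⟨t, rfl⟩ := h
  rw [strProb_append]
  exact mul_le_of_le_one_right' (strProb_le_one P t)

lemma tsum_strProb_length (n : ℕ) :
    ∑' γ : {γ : List A // γ.length = n}, strProb P γ = 1 := by
  induction n with
  | zero =>
    rw [tsum_eq_single (⟨[], rfl⟩ : {γ : List A // γ.length = 0})
      fun γ hγ => (hγ (Subtype.ext (List.length_eq_zero_iff.1 γ.2))).elim]
    rfl
  | succ n ih =>
    let cons : A × {γ : List A // γ.length = n} ≃ {γ : List A // γ.length = n + 1} :=
      { toFun := fun p => ⟨p.1 :: p.2.1, by simp [p.2.2]⟩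
        invFun := fun γ => match γ with
          | ⟨a :: γ, h⟩ => (a, ⟨γ, Nat.succ_injective h⟩)
        left_inv := fun _ => rfl
        right_inv := fun
          | ⟨_ :: _, _⟩ => rfl }
    rw [← cons.tsum_eq]
    simp only [cons, Equiv.coe_fn_mk, strProb_cons, ENNReal.tsum_prod', ENNReal.tsum_mul_left, ih,
      mul_one, P.tsum_coe]

lemma tsum_strProb_length_prefix (β : List A) {n : ℕ} (hn : β.length ≤ n) :
    ∑' γ : {γ : List A // γ.length = n ∧ β <+: γ}, strProb P γ = strProb P β := by
  let append : {δ : List A // δ.length = n - β.length} ≃ {γ : List A // γ.length = n ∧ β <+: γ} :=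
    { toFun := fun δ => ⟨β ++ δ.1, by simp [δ.2]; omega, List.prefix_append β δ.1⟩
      invFun := fun γ => ⟨γ.1.drop β.length, by simp [γ.2.1]⟩
      left_inv := fun δ => by simp
      right_inv := fun γ =>
        Subtype.ext (List.prefix_iff_eq_take.1 γ.2.2 ▸ List.take_append_drop _ _) }
  rw [← append.tsum_eq]
  simp only [append, Equiv.coe_fn_mk, strProb_append, ENNReal.tsum_mul_left]
  rw [tsum_strProb_length, mul_one]

lemma tsum_strProb_length_prefix_le (β : List A) (n : ℕ) :
    ∑' γ : {γ : List A // γ.length = n ∧ β <+: γ}, strProb P γ ≤ strProb P β := by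
  by_cases hn : β.length ≤ n
  · exact (tsum_strProb_length_prefix P β hn).le
  · have : IsEmpty {γ : List A // γ.length = n ∧ β <+: γ} :=
      ⟨fun γ => hn (γ.2.1 ▸ γ.2.2.length_le)⟩
    simp

end StringProbability

section AlmostSureCompleteness

variable {A : Type*} (P : PMF A) (D : Set (List A))

lemma prefixProb_add_tsum_Tset (n : ℕ) :
    prefixProb P D n + ∑' γ : Tset D n, strProb P γ = 1 := by
  have hdisj : Disjoint {γ : List A | γ.length = n ∧ ∃ β ∈ D, β <+: γ} (Tset D n) :=
    Set.disjoint_left.2 fun _ ⟨_, β, hβD, hβγ⟩ hT => hT.2 β hβD hβγ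
  have hunion : {γ : List A | γ.length = n ∧ ∃ β ∈ D, β <+: γ} ∪ Tset D n =
      {γ | γ.length = n} := by
    ext γ
    simp only [Tset, Set.mem_union, Set.mem_ofPred_eq]
    grind
  rw [prefixProb, ← tsum_strProb_length P n]
  exact (ENNReal.summable.tsum_union_disjoint hdisj ENNReal.summable).symm.trans
    (by rw [hunion]; rfl)

lemma IsASC.tendsto_tsum_Tset {P : PMF A} {D : Set (List A)} (hasc : IsASC P D) :
    Tendsto (fun n => ∑' γ : Tset D n, strProb P γ) atTop (nhds 0) := by
  have hsub : ∀ n, ∑' γ : Tset D n, strProb P γ = 1 - prefixProb P D n := fun n =>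
    ENNReal.eq_sub_of_add_eq' ENNReal.one_ne_top
      ((add_comm _ _).trans (prefixProb_add_tsum_Tset P D n))
  simpa [hsub] using ENNReal.Tendsto.sub tendsto_const_nhds hasc (Or.inl ENNReal.one_ne_top)

variable {P D}

lemma strProb_le_tsum_prefixSet_add_tsum_Tset {β : List A}
    (hβ : ∀ γ ∈ D, γ.length < β.length → ¬ γ <+: β) {n : ℕ} (hn : β.length ≤ n) :
    strProb P β ≤ ∑' α : {α ∈ D | β <+: α}, strProb P α + ∑' γ : Tset D n, strProb P γ := by
  have hcover : {γ : List A | γ.length = n ∧ β <+: γ} ⊆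
      (⋃ α ∈ {α ∈ D | β <+: α}, {γ : List A | γ.length = n ∧ α <+: γ}) ∪ Tset D n := by
    rintro γ ⟨hγn, hβγ⟩
    by_cases hcov : ∃ α ∈ D, α <+: γ
    · obtain ⟨α, hαD, hαγ⟩ := hcov
      have hβα : β <+: α := by
        rcases le_or_gt β.length α.length with hle | hlt
        · exact List.prefix_of_prefix_length_le hβγ hαγ hle
        · exact absurd (List.prefix_of_prefix_length_le hαγ hβγ hlt.le) (hβ α hαD hlt)
      exact Or.inl (Set.mem_biUnion ⟨hαD, hβα⟩ ⟨hγn, hαγ⟩)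
    · exact Or.inr ⟨hγn, fun α hαD hαγ => hcov ⟨α, hαD, hαγ⟩⟩
  calc strProb P β = ∑' γ : {γ : List A | γ.length = n ∧ β <+: γ}, strProb P γ :=
        (tsum_strProb_length_prefix P β hn).symm
    _ ≤ ∑' γ : ↑((⋃ α ∈ {α ∈ D | β <+: α}, {γ : List A | γ.length = n ∧ α <+: γ}) ∪ Tset D n),
          strProb P γ := ENNReal.tsum_mono_subtype _ hcover
    _ ≤ ∑' γ : ↑(⋃ α ∈ {α ∈ D | β <+: α}, {γ : List A | γ.length = n ∧ α <+: γ}), strProb P γ +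
          ∑' γ : Tset D n, strProb P γ := ENNReal.tsum_union_le _ _ _
    _ ≤ ∑' α : {α ∈ D | β <+: α}, strProb P α + ∑' γ : Tset D n, strProb P γ := by
        gcongr
        exact (ENNReal.tsum_biUnion_le_tsum _ _ _).trans
          (ENNReal.tsum_le_tsum fun α => tsum_strProb_length_prefix_le P α n)

lemma strProb_le_tsum_prefixSet (hasc : IsASC P D) {β : List A}
    (hβ : ∀ γ ∈ D, γ.length < β.length → ¬ γ <+: β) :
    strProb P β ≤ ∑' α : {α ∈ D | β <+: α}, strProb P α := by
  refine ge_of_tendsto (by simpa using tendsto_const_nhds.add hasc.tendsto_tsum_Tset) ?_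
  filter_upwards [eventually_ge_atTop β.length] with n hn
  exact strProb_le_tsum_prefixSet_add_tsum_Tset hβ hn

end AlmostSureCompleteness

lemma entTerm_eq_mul {p : ℝ≥0∞} (hp : p ≠ ⊤) :
    entTerm p = p * ENNReal.ofReal (-Real.logb 2 p.toReal) := by
  rw [entTerm, ← mul_neg, ENNReal.ofReal_mul ENNReal.toReal_nonneg, ENNReal.ofReal_toReal hp]

lemma mul_ofReal_neg_logb_le_entTerm {p q : ℝ≥0∞} (hqp : q ≤ p) (hp : p ≠ ⊤) :
    q * ENNReal.ofReal (-Real.logb 2 p.toReal) ≤ entTerm q := by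
  have hq : q ≠ ⊤ := ne_top_of_le_ne_top hp hqp
  obtain rfl | hq0 := eq_or_ne q 0
  · simp
  rw [entTerm_eq_mul hq]
  gcongr
  · norm_num
  · exact ENNReal.toReal_pos hq0 hq

theorem entTerm_le_dictEntropy_prefixSet_general {A : Type*}
    (P : PMF A) (D : Set (List A)) (hasc : IsASC P D) (β : List A)
    (hβ : ∀ γ ∈ D, γ.length < β.length → ¬ γ <+: β) :
    entTerm (strProb P β) ≤ dictEntropy P {α ∈ D | β <+: α} := by
  set c := ENNReal.ofReal (-Real.logb 2 (strProb P β).toReal)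
  calc entTerm (strProb P β) = strProb P β * c := entTerm_eq_mul (strProb_ne_top P β)
    _ ≤ (∑' α : {α ∈ D | β <+: α}, strProb P α) * c := by
        gcongr
        exact strProb_le_tsum_prefixSet hasc hβ
    _ = ∑' α : {α ∈ D | β <+: α}, strProb P α * c := ENNReal.tsum_mul_right.symm
    _ ≤ dictEntropy P {α ∈ D | β <+: α} := ENNReal.tsum_le_tsum fun α =>
        mul_ofReal_neg_logb_le_entTerm (strProb_le_of_prefix P α.2.2) (strProb_ne_top P β)

/-- If `D` is proper and almost surely complete and no string
of `D` of length `< |β|` is a prefix of `β`, then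
`-∑_{α ∈ (D,β)} P(α) log₂ P(α) ≥ -P(β) log₂ P(β)`. -/
theorem entTerm_le_dictEntropy_prefixSet {A : Type*} [Countable A]
    (P : PMF A) (D : Set (List A)) (hdict : IsDictionary D)
    (hprop : IsProper D) (hasc : IsASC P D) (β : List A)
    (hβ : ∀ γ ∈ D, γ.length < β.length → ¬ γ <+: β) :
    entTerm (strProb P β) ≤ dictEntropy P {α ∈ D | β <+: α} :=
  entTerm_le_dictEntropy_prefixSet_general P D hasc β hβ
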